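/- Let n ≥ 2 and let P be a p-subgroup of the symmetric group S_n having exactly a_0 orbits of size 1 on {1,…,n}. If a_0 = 0, then dim_F Y^{(n−1,1)}(P) = 0. If a_0 ≥ 1, then dim_F Y^{(n−1,1)}(P) = a_0 if p divides n, and dim_F Y^{(n−1,1)}(P) = a_0 − 1 if p does not divide n. -/

import Mathlib

open scoped BigOperators

/-! ## Brauer construction for representations of finite groups -/

section Brauer

variable {F : Type} [Field F] {G : Type} [Group G]
variable {V : Type} [AddCommGroup V] [Module F V]

/-- The submodule of `P`-fixed points of a representation. -/
def repFixed (ρ : Representation F G V) (P : Subgroup G) : Submodule F V where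
  carrier := {v | ∀ g ∈ P, ρ g v = v}
  add_mem' := by
    intro a b ha hb g hg
    simp [map_add, ha g hg, hb g hg]
  zero_mem' := by
    intro g hg
    simp
  smul_mem' := by
    intro c v hv g hg
    simp [map_smul, hv g hg]

/-- The relative trace map `Tr_Q^P` (as a bare function, summing over a set of
left coset representatives of `Q` in `P`). -/
noncomputable def relTrace [Finite G] (ρ : Representation F G V) (P Q : Subgroup G)
    (v : V) : V := by
  classical
  have : Fintype (P ⧸ Q.subgroupOf P) := Fintype.ofFinite _
  exact ∑ x : P ⧸ Q.subgroupOf P, ρ ((Quotient.out x : ↥P) : G) v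

/-- The subspace `Tr^P(M) = Σ_{Q < P} Tr_Q^P (M^Q)` (as a submodule of `V`). -/
noncomputable def brauerTraceSub [Finite G] (ρ : Representation F G V) (P : Subgroup G) :
    Submodule F V :=
  Submodule.span F {w | ∃ Q : Subgroup G, Q < P ∧ ∃ v ∈ repFixed ρ Q, w = relTrace ρ P Q v}

/-- The dimension of the Brauer construction `M(P) = M^P / Tr^P(M)`. -/
noncomputable def brauerDim [Finite G] (ρ : Representation F G V) (P : Subgroup G) : ℕ :=
  Module.finrank F
    (↥(repFixed ρ P) ⧸ ((brauerTraceSub ρ P).comap (repFixed ρ P).subtype))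

/-- `σ` is (isomorphic to) a direct summand of `ρ`: there is an equivariant split
injection of `σ` into `ρ`. -/
def IsRepSummand {W : Type} [AddCommGroup W] [Module F W]
    (ρ : Representation F G V) (σ : Representation F G W) : Prop :=
  ∃ (ι : W →ₗ[F] V) (π : V →ₗ[F] W),
    (∀ g w, ι (σ g w) = ρ g (ι w)) ∧ (∀ g v, π (ρ g v) = σ g (π v)) ∧ ∀ w, π (ι w) = w

/-- A representation is indecomposable: nonzero, and admitting no nontrivial
decomposition into two invariant submodules. -/
def IsIndecomposableRep (ρ : Representation F G V) : Prop :=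
  (∃ v : V, v ≠ 0) ∧
  ∀ A B : Submodule F V, (∀ g, ∀ v ∈ A, ρ g v ∈ A) → (∀ g, ∀ v ∈ B, ρ g v ∈ B) →
    A ⊓ B = ⊥ → A ⊔ B = ⊤ → A = ⊥ ∨ B = ⊥

/-- Isomorphism of representations. -/
def RepIso {W : Type} [AddCommGroup W] [Module F W]
    (ρ : Representation F G V) (σ : Representation F G W) : Prop :=
  ∃ e : V ≃ₗ[F] W, ∀ g v, e (ρ g v) = σ g (e v)

end Brauer

/-! ## Compositions, partitions, tabloids and Young modules -/

section Young

/-- A composition of `n` as a finitely supported function `ℕ → ℕ` with sum `n`. -/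
def IsCompositionFn (c : ℕ → ℕ) (n : ℕ) : Prop :=
  (Function.support c).Finite ∧ ∑ᶠ j, c j = n

/-- A partition of `n` as a finitely supported weakly decreasing function `ℕ → ℕ`
with sum `n`. -/
def IsPartitionFn (c : ℕ → ℕ) (n : ℕ) : Prop :=
  IsCompositionFn c n ∧ Antitone c

/-- A `p`-restricted partition: all successive differences (including the last
part) are `< p`. -/
def IsPRestrictedFn (p : ℕ) (c : ℕ → ℕ) : Prop := ∀ j, c j - c (j + 1) < p

/-- The dominance order: `Dominates lam mu` means `lam ⊵ mu`. -/
def Dominates (lam mu : ℕ → ℕ) : Prop :=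
  ∀ N, ∑ j ∈ Finset.range N, mu j ≤ ∑ j ∈ Finset.range N, lam j

/-- Strict dominance `lam ⊳ mu`. -/
def StrictDominates (lam mu : ℕ → ℕ) : Prop := Dominates lam mu ∧ lam ≠ mu

/-- A `c`-tabloid: a tuple of pairwise disjoint subsets of `{1,…,n}` covering
everything, the `j`-th of size `c j`. -/
structure Tabloid (n : ℕ) (c : ℕ → ℕ) where
  row : ℕ → Finset (Fin n)
  disj : ∀ i j, i ≠ j → Disjoint (row i) (row j)
  card_row : ∀ j, (row j).card = c j
  cover : ∀ x, ∃ j, x ∈ row j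

theorem Tabloid.ext' {n : ℕ} {c : ℕ → ℕ} {T S : Tabloid n c} (h : T.row = S.row) :
    T = S := by
  cases T; cases S; simp_all

/-- The natural action of the symmetric group on tabloids. -/
instance {n : ℕ} {c : ℕ → ℕ} : MulAction (Equiv.Perm (Fin n)) (Tabloid n c) where
  smul σ T :=
    { row := fun j => (T.row j).image σ
      disj := fun i j h => (Finset.disjoint_image σ.injective).mpr (T.disj i j h)
      card_row := fun j => by
        rw [Finset.card_image_of_injective _ σ.injective, T.card_row]
      cover := fun x => by
        obtain ⟨j, hj⟩ := T.cover (σ⁻¹ x)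
        exact ⟨j, Finset.mem_image.mpr ⟨σ⁻¹ x, hj, by simp⟩⟩ }
  one_smul T := Tabloid.ext' (by funext j; exact Finset.image_id)
  mul_smul a b T := Tabloid.ext' (by
    funext j
    show Finset.image (⇑(a * b)) _ = Finset.image ⇑a (Finset.image ⇑b _)
    rw [Finset.image_image]
    rfl)

/-- The Young permutation module `M^c`, as the permutation representation of
`S_n` on the free `F`-module on the set of `c`-tabloids. -/
noncomputable def youngRep (F : Type) [Field F] (n : ℕ) (c : ℕ → ℕ) :
    Representation F (Equiv.Perm (Fin n)) (Tabloid n c →₀ F) :=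
  { toFun := fun g => Finsupp.lmapDomain F F (g • ·)
    map_one' := by ext x y; simp
    map_mul' := fun x y => by ext z w; simp [mul_smul] }

/-- `ρ` is a Young module `Y^lam`: an indecomposable direct summand of `M^lam`
which is not a direct summand of any `M^mu` with `mu ⊳ lam`. -/
def IsYoungModuleFor (F : Type) [Field F] (n : ℕ) (lam : ℕ → ℕ)
    {V : Type} [AddCommGroup V] [Module F V]
    (ρ : Representation F (Equiv.Perm (Fin n)) V) : Prop :=
  IsIndecomposableRep ρ ∧ IsRepSummand (youngRep F n lam) ρ ∧
  ∀ mu : ℕ → ℕ, IsPartitionFn mu n → StrictDominates mu lam →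
    ¬ IsRepSummand (youngRep F n mu) ρ

end Young

/-! ## Orbit types, Young subgroups and related combinatorics -/

section Orbits

/-- The orbit type of a subgroup `P ≤ S_n`: the multiset of cardinalities of
the orbits of `P` on `{1,…,n}`. -/
noncomputable def orbitType (n : ℕ) (P : Subgroup (Equiv.Perm (Fin n))) : Multiset ℕ := by
  classical
  exact (Finset.univ.image fun x : Fin n => MulAction.orbit P x).val.map fun s => s.ncard

/-- The multiset of (nonempty) fiber sizes of a labelling `f : {1,…,n} → ℕ`;
the fibers of `f` are the blocks of a set partition of `{1,…,n}`. -/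
noncomputable def fiberSizes {n : ℕ} (f : Fin n → ℕ) : Multiset ℕ := by
  classical
  exact (Finset.univ.image f).val.map fun j => (Finset.univ.filter fun x => f x = j).card

/-- The subgroup of permutations preserving each fiber (block) of the
labelling `f`; for an interval labelling this is a Young subgroup. -/
def blockStabilizer (n : ℕ) (f : Fin n → ℕ) : Subgroup (Equiv.Perm (Fin n)) where
  carrier := {σ | ∀ x, f (σ x) = f x}
  one_mem' := fun _ => rfl
  mul_mem' := by
    intro a b ha hb x
    rw [Equiv.Perm.mul_apply, ha, hb]
  inv_mem' := by
    intro a ha x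
    simpa using (ha (a⁻¹ x)).symm

/-- `P` is a Sylow `p`-subgroup of the subgroup `H`. -/
def IsSylowPSubgroupIn {G : Type} [Group G] (p : ℕ) (P H : Subgroup G) : Prop :=
  P ≤ H ∧ IsPGroup p P ∧ ∀ Q : Subgroup G, IsPGroup p Q → Q ≤ H → P ≤ Q → Q = P

/-- Every member of `O` is a power of `p`. -/
def IsPPowerMultiset (p : ℕ) (O : Multiset ℕ) : Prop := ∀ x ∈ O, ∃ i : ℕ, x = p ^ i

/-- `lamE 0, …, lamE s` is the `p`-adic expansion of the partition `lam`:
each `lamE i` is a `p`-restricted partition and `lam = Σ_i p^i • lamE i`. -/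
def IsPAdicExpansionOf (p : ℕ) (lam : ℕ → ℕ) (s : ℕ) (lamE : ℕ → ℕ → ℕ) : Prop :=
  (∀ i, i ≤ s →
    (Function.support (lamE i)).Finite ∧ Antitone (lamE i) ∧ IsPRestrictedFn p (lamE i)) ∧
  ∀ j, lam j = ∑ i ∈ Finset.range (s + 1), p ^ i * lamE i j

/-- The multiset `O_lam = (1^{|lam(0)|}, p^{|lam(1)|}, …, (p^s)^{|lam(s)|})`
attached to a `p`-adic expansion. -/
noncomputable def pAdicOrbitMultiset (p s : ℕ) (lamE : ℕ → ℕ → ℕ) : Multiset ℕ :=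
  ∑ i ∈ Finset.range (s + 1), Multiset.replicate (∑ᶠ j, lamE i j) (p ^ i)

/-- `O` is a rearrangement of a refinement of `O'`: `O` is a disjoint union of
submultisets, one summing to each element of `O'`. -/
def IsRefinementRearrangement (O O' : Multiset ℕ) : Prop :=
  ∃ C : Multiset (Multiset ℕ), C.map Multiset.sum = O' ∧ C.sum = O

/-- `P` is conjugate to a subgroup of `Q`. -/
def IsConjSubgroup {G : Type} [Group G] (P Q : Subgroup G) : Prop :=
  ∃ g : G, ∀ x ∈ P, g * x * g⁻¹ ∈ Q

/-- An elementary abelian `p`-subgroup. -/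
def IsElementaryAbelian (p : ℕ) {G : Type} [Group G] (E : Subgroup G) : Prop :=
  (∀ x ∈ E, x ^ p = 1) ∧ ∀ x ∈ E, ∀ y ∈ E, x * y = y * x

/-- Every row of the tabloid `T` is a union of fibers (blocks) of `f`. -/
def rowsUnionOfFibers {n : ℕ} {c : ℕ → ℕ} (f : Fin n → ℕ) (T : Tabloid n c) : Prop :=
  ∀ j x y, f x = f y → x ∈ T.row j → y ∈ T.row j

/-- The number `m_{c,O}`: the number of `c`-tabloids each of whose rows is a
union of blocks of the set partition with labelling `f`. -/
noncomputable def mNumber (n : ℕ) (c : ℕ → ℕ) (f : Fin n → ℕ) : ℕ :=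
  Nat.card {T : Tabloid n c // rowsUnionOfFibers f T}

end Orbits

/-! ## Generic Jordan types -/

section Jordan

/-- The nilpotent Jordan block of size `p` over `K`, as an endomorphism of `K^p`. -/
def jordanShift (p : ℕ) (K : Type) [Field K] : (Fin p → K) →ₗ[K] (Fin p → K) where
  toFun v := fun i => if h : i.val + 1 < p then v ⟨i.val + 1, h⟩ else 0
  map_add' x y := by
    funext i
    by_cases h : (i : ℕ) + 1 < p <;> simp [h]
  map_smul' c x := by
    funext i
    by_cases h : (i : ℕ) + 1 < p <;> simp [h]

/-- The rational function field `F(α_1, …, α_k)`. -/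
abbrev RatFuncField (F : Type) [Field F] (k : ℕ) : Type :=
  FractionRing (MvPolynomial (Fin k) F)

/-- The operator `u_α − 1 = Σ_i α_i (ρ(g_i) − 1)` on `K ⊗_F V`, where
`K = F(α_1,…,α_k)`. -/
noncomputable def uAlphaSubOne {F : Type} [Field F] {G : Type} [Group G]
    {V : Type} [AddCommGroup V] [Module F V]
    (ρ : Representation F G V) (k : ℕ) (g : Fin k → G) :
    TensorProduct F (RatFuncField F k) V →ₗ[RatFuncField F k]
      TensorProduct F (RatFuncField F k) V :=
  ∑ i : Fin k,
    (algebraMap (MvPolynomial (Fin k) F) (RatFuncField F k) (MvPolynomial.X i)) •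
      LinearMap.baseChange (RatFuncField F k) (ρ (g i) - LinearMap.id)

end Jordan

/-!
`M^{(n-1,1)}` is the natural permutation module `F^n` of `S_n`. An `S_n`-invariant subspace of
`F^n` either consists of constant vectors or contains the augmentation kernel, so an
indecomposable summand of `F^n` is the trivial module (ruled out: it is a summand of `M^{(n)}`
and `(n) ⊳ (n-1,1)`), all of `F^n` when `p ∣ n`, or, when `p ∤ n`, a complement `Y` of the
constants with `F^n ≅ Y ⊕ F`. The Brauer construction is additive, sends the trivial module to
`F`, and sends a permutation module to the span of the `P`-fixed points, of which there are
`a_0`; so `dim Y(P)` is `a_0`, respectively `a_0 - 1`.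
-/

open MulAction

section Summands

variable {F : Type} [Field F] {G : Type} [Group G]
variable {U : Type} [AddCommGroup U] [Module F U] {V : Type} [AddCommGroup V] [Module F V]
  {W : Type} [AddCommGroup W] [Module F W]
variable {τ : Representation F G U} {ρ : Representation F G V} {σ : Representation F G W}

lemma LinearEquiv.symm_apply_equivariant {e : V ≃ₗ[F] W} (he : ∀ g v, e (ρ g v) = σ g (e v))
    (g : G) (w : W) : e.symm (σ g w) = ρ g (e.symm w) :=
  e.symm_apply_eq.mpr (by rw [he, e.apply_symm_apply])

lemma RepIso.symm (h : RepIso ρ σ) : RepIso σ ρ := by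
  obtain ⟨e, he⟩ := h
  exact ⟨e.symm, LinearEquiv.symm_apply_equivariant he⟩

lemma RepIso.isRepSummand (h : RepIso ρ σ) : IsRepSummand ρ σ := by
  obtain ⟨e, he⟩ := h
  exact ⟨e.symm, e, LinearEquiv.symm_apply_equivariant he, he, e.apply_symm_apply⟩

lemma IsRepSummand.trans (h₁ : IsRepSummand τ ρ) (h₂ : IsRepSummand ρ σ) : IsRepSummand τ σ := by
  obtain ⟨ι₁, π₁, hι₁, hπ₁, hπι₁⟩ := h₁
  obtain ⟨ι₂, π₂, hι₂, hπ₂, hπι₂⟩ := h₂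
  exact ⟨ι₁ ∘ₗ ι₂, π₂ ∘ₗ π₁, fun g w => by simp [hι₁, hι₂], fun g v => by simp [hπ₁, hπ₂],
    fun w => by simp [hπι₁, hπι₂]⟩

lemma RepIso.isIndecomposableRep (h : RepIso ρ σ) (hρ : IsIndecomposableRep ρ) :
    IsIndecomposableRep σ := by
  obtain ⟨e, he⟩ := h.symm
  let Φ := Submodule.orderIsoMapComap e
  have hΦ : ∀ A : Submodule F W, (∀ g, ∀ v ∈ A, σ g v ∈ A) → ∀ g, ∀ v ∈ Φ A, ρ g v ∈ Φ A := by
    rintro A hA g _ ⟨w, hw, rfl⟩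
    exact ⟨σ g w, hA g w hw, he g w⟩
  obtain ⟨v, hv⟩ := hρ.1
  refine ⟨⟨e.symm v, by simpa using hv⟩, fun A B hA hB hinf hsup => ?_⟩
  refine (hρ.2 (Φ A) (Φ B) (hΦ A hA) (hΦ B hB) ?_ ?_).imp (fun h => ?_) (fun h => ?_)
  · rw [← Φ.map_inf, hinf, Φ.map_bot]
  · rw [← Φ.map_sup, hsup, Φ.map_top]
  · exact Φ.injective (h.trans Φ.map_bot.symm)
  · exact Φ.injective (h.trans Φ.map_bot.symm)

end Summands

section BrauerConstruction

variable {F : Type} [Field F] {G : Type} [Group G]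
variable {V : Type} [AddCommGroup V] [Module F V] {W : Type} [AddCommGroup W] [Module F W]
variable {ρ : Representation F G V} {σ : Representation F G W}

lemma relTrace_eq [Finite G] (ρ : Representation F G V) (P Q : Subgroup G)
    [Fintype (P ⧸ Q.subgroupOf P)] (v : V) :
    relTrace ρ P Q v = ∑ x : P ⧸ Q.subgroupOf P, ρ ((Quotient.out x : P) : G) v := by
  rw [relTrace, Subsingleton.elim (Fintype.ofFinite (P ⧸ Q.subgroupOf P)) ‹_›]

lemma map_repFixed_le (f : V →ₗ[F] W) (hf : ∀ g v, f (ρ g v) = σ g (f v)) (P : Subgroup G) :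
    (repFixed ρ P).map f ≤ repFixed σ P := by
  rintro _ ⟨v, hv, rfl⟩ g hg
  rw [← hf, hv g hg]

lemma map_relTrace [Finite G] (f : V →ₗ[F] W) (hf : ∀ g v, f (ρ g v) = σ g (f v))
    (P Q : Subgroup G) (v : V) : f (relTrace ρ P Q v) = relTrace σ P Q (f v) := by
  have := Fintype.ofFinite (P ⧸ Q.subgroupOf P)
  simp only [relTrace_eq, map_sum, hf]

lemma map_brauerTraceSub_le [Finite G] (f : V →ₗ[F] W) (hf : ∀ g v, f (ρ g v) = σ g (f v))
    (P : Subgroup G) : (brauerTraceSub ρ P).map f ≤ brauerTraceSub σ P := by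
  rw [brauerTraceSub, Submodule.map_span_le]
  rintro _ ⟨Q, hQP, v, hv, rfl⟩
  rw [map_relTrace f hf]
  exact Submodule.subset_span ⟨Q, hQP, f v, map_repFixed_le f hf Q ⟨v, hv, rfl⟩, rfl⟩

lemma Submodule.map_equiv_eq_of_le {A : Submodule F V} {B : Submodule F W} (e : V ≃ₗ[F] W)
    (h : A.map (e : V →ₗ[F] W) ≤ B) (h' : B.map (e.symm : W →ₗ[F] V) ≤ A) :
    A.map (e : V →ₗ[F] W) = B := by
  refine le_antisymm h ?_
  rwa [Submodule.map_le_iff_le_comap, Submodule.comap_equiv_eq_map_symm, e.symm_symm] at h'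

lemma finrank_quotient_comap_subtype_map_equiv (e : V ≃ₗ[F] W) (A B : Submodule F V) :
    Module.finrank F (A ⧸ B.comap A.subtype)
      = Module.finrank F (A.map (e : V →ₗ[F] W) ⧸ (B.map (e : V →ₗ[F] W)).comap
          (A.map (e : V →ₗ[F] W)).subtype) := by
  refine (Submodule.Quotient.equiv _ _ (e.submoduleMap A) ?_).finrank_eq
  ext ⟨w, hw⟩
  simp

lemma RepIso.brauerDim_eq [Finite G] (h : RepIso ρ σ) (P : Subgroup G) :
    brauerDim ρ P = brauerDim σ P := by
  obtain ⟨e, he⟩ := h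
  have he' := LinearEquiv.symm_apply_equivariant he
  rw [brauerDim, brauerDim, finrank_quotient_comap_subtype_map_equiv e,
    Submodule.map_equiv_eq_of_le e (map_repFixed_le _ he P) (map_repFixed_le (σ := ρ) _ he' P),
    Submodule.map_equiv_eq_of_le e (map_brauerTraceSub_le _ he P)
      (map_brauerTraceSub_le (σ := ρ) _ he' P)]

lemma repFixed_prod (P : Subgroup G) :
    repFixed (ρ.prod σ) P = (repFixed ρ P).prod (repFixed σ P) :=
  le_antisymm
    ((Submodule.le_prod_iff F V W).mpr
      ⟨map_repFixed_le _ (fun _ _ => rfl) P, map_repFixed_le _ (fun _ _ => rfl) P⟩)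
    ((Submodule.prod_le_iff F V W).mpr
      ⟨map_repFixed_le _ (fun _ _ => by simp) P, map_repFixed_le _ (fun _ _ => by simp) P⟩)

lemma brauerTraceSub_prod [Finite G] (P : Subgroup G) :
    brauerTraceSub (ρ.prod σ) P = (brauerTraceSub ρ P).prod (brauerTraceSub σ P) :=
  le_antisymm
    ((Submodule.le_prod_iff F V W).mpr
      ⟨map_brauerTraceSub_le _ (fun _ _ => rfl) P, map_brauerTraceSub_le _ (fun _ _ => rfl) P⟩)
    ((Submodule.prod_le_iff F V W).mpr
      ⟨map_brauerTraceSub_le _ (fun _ _ => by simp) P,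
        map_brauerTraceSub_le _ (fun _ _ => by simp) P⟩)

lemma finrank_quotient_comap_subtype_prod [FiniteDimensional F V] [FiniteDimensional F W]
    (A₁ B₁ : Submodule F V) (A₂ B₂ : Submodule F W) :
    Module.finrank F (A₁.prod A₂ ⧸ (B₁.prod B₂).comap (A₁.prod A₂).subtype)
      = Module.finrank F (A₁ ⧸ B₁.comap A₁.subtype)
        + Module.finrank F (A₂ ⧸ B₂.comap A₂.subtype) := by
  let Θ : A₁.prod A₂ →ₗ[F] (A₁ ⧸ B₁.comap A₁.subtype) × (A₂ ⧸ B₂.comap A₂.subtype) :=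
    ((B₁.comap A₁.subtype).mkQ ∘ₗ
        (LinearMap.fst F V W).restrict fun _ h => (Submodule.mem_prod.mp h).1).prod
      ((B₂.comap A₂.subtype).mkQ ∘ₗ
        (LinearMap.snd F V W).restrict fun _ h => (Submodule.mem_prod.mp h).2)
  have hΘ : Function.Surjective Θ := by
    rintro ⟨⟨⟨a₁, h₁⟩⟩, ⟨⟨a₂, h₂⟩⟩⟩
    exact ⟨⟨(a₁, a₂), h₁, h₂⟩, rfl⟩
  have hker : LinearMap.ker Θ = (B₁.prod B₂).comap (A₁.prod A₂).subtype := by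
    ext x
    simp only [Θ, LinearMap.ker_prod, Submodule.mem_inf, LinearMap.mem_ker, LinearMap.coe_comp,
      Function.comp_apply, Submodule.mkQ_apply, Submodule.Quotient.mk_eq_zero,
      Submodule.mem_comap, Submodule.subtype_apply, Submodule.mem_prod]
    rfl
  rw [← Module.finrank_prod, ← hker]
  exact (LinearMap.quotKerEquivOfSurjective Θ hΘ).finrank_eq

lemma brauerDim_prod [Finite G] [FiniteDimensional F V] [FiniteDimensional F W]
    (P : Subgroup G) : brauerDim (ρ.prod σ) P = brauerDim ρ P + brauerDim σ P := by
  rw [brauerDim, repFixed_prod, brauerTraceSub_prod, finrank_quotient_comap_subtype_prod]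
  rfl

lemma IsPGroup.index_subgroupOf_cast_eq_zero [Finite G] {p : ℕ} [Fact p.Prime] [CharP F p]
    {P Q : Subgroup G} (hP : IsPGroup p P) (hQP : Q < P) :
    ((Q.subgroupOf P).index : F) = 0 := by
  obtain ⟨k, hk⟩ := hP.index (Q.subgroupOf P)
  have hk0 : k ≠ 0 := by
    rintro rfl
    rw [pow_zero, Subgroup.index_eq_one, Subgroup.subgroupOf_eq_top] at hk
    exact hQP.not_ge hk
  rw [hk, Nat.cast_pow, CharP.cast_eq_zero, zero_pow hk0]

/-- A `P`-invariant map sends `Tr_Q^P v` to `[P : Q] • ℓ v`, and `p ∣ [P : Q]` for `Q < P`. -/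
lemma brauerTraceSub_le_ker [Finite G] {p : ℕ} [Fact p.Prime] [CharP F p] {P : Subgroup G}
    (hP : IsPGroup p P) (ℓ : V →ₗ[F] W) (hℓ : ∀ g ∈ P, ∀ v, ℓ (ρ g v) = ℓ v) :
    brauerTraceSub ρ P ≤ LinearMap.ker ℓ := by
  rw [brauerTraceSub, Submodule.span_le]
  rintro _ ⟨Q, hQP, v, -, rfl⟩
  have := Fintype.ofFinite (P ⧸ Q.subgroupOf P)
  rw [SetLike.mem_coe, LinearMap.mem_ker, relTrace_eq, map_sum,
    Finset.sum_congr rfl fun x _ => hℓ _ (Quotient.out x).2 v, Finset.sum_const, Finset.card_univ,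
    ← Nat.card_eq_fintype_card, ← Subgroup.index_eq_card, ← Nat.cast_smul_eq_nsmul F,
    hP.index_subgroupOf_cast_eq_zero hQP, zero_smul]

lemma brauerDim_trivial [Finite G] {p : ℕ} [Fact p.Prime] [CharP F p] {P : Subgroup G}
    (hP : IsPGroup p P) : brauerDim (Representation.trivial F G F) P = 1 := by
  have hfix : repFixed (Representation.trivial F G F) P = ⊤ :=
    eq_top_iff.mpr fun _ _ _ _ => rfl
  have htr : brauerTraceSub (Representation.trivial F G F) P = ⊥ := by
    simpa using brauerTraceSub_le_ker hP LinearMap.id fun _ _ _ => rfl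
  rw [brauerDim, htr, Submodule.comap_bot, Submodule.ker_subtype,
    (Submodule.quotEquivOfEqBot _ rfl).finrank_eq, hfix, finrank_top, Module.finrank_self]

end BrauerConstruction

section PermutationModule

noncomputable def permRep (F : Type) [Field F] (G : Type) [Group G] (X : Type) [MulAction G X] :
    Representation F G (X →₀ F) where
  toFun g := Finsupp.lmapDomain F F (g • ·)
  map_one' := by ext x y; simp
  map_mul' x y := by ext z w; simp [mul_smul]

variable {F : Type} [Field F] {G : Type} [Group G] {X : Type} [MulAction G X]

lemma permRep_eq_mapDomain (g : G) (v : X →₀ F) :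
    permRep F G X g v = Finsupp.mapDomain (g • ·) v :=
  rfl

lemma permRep_single (g : G) (x : X) (r : F) :
    permRep F G X g (Finsupp.single x r) = Finsupp.single (g • x) r :=
  Finsupp.mapDomain_single

lemma permRep_apply (g : G) (v : X →₀ F) (x : X) : permRep F G X g v x = v (g⁻¹ • x) := by
  rw [← smul_inv_smul g x, inv_smul_smul]
  exact Finsupp.mapDomain_apply (MulAction.injective g) v _

lemma relTrace_permRep_single [Finite G] (P : Subgroup G) (x : X) [Fintype (orbit P x)]
    (r : F) :
    relTrace (permRep F G X) P (stabilizer G x ⊓ P) (Finsupp.single x r)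
      = ∑ y : orbit P x, Finsupp.single (y : X) r := by
  have hQ : (stabilizer G x ⊓ P).subgroupOf P = stabilizer P x := by
    ext g
    simp [Subgroup.mem_subgroupOf, mem_stabilizer_iff, Subgroup.smul_def]
  have := Fintype.ofFinite (P ⧸ (stabilizer G x ⊓ P).subgroupOf P)
  rw [relTrace_eq]
  refine Fintype.sum_equiv
    ((Subgroup.quotientEquivOfEq hQ).trans (orbitEquivQuotientStabilizer P x).symm) _ _
    fun c => ?_
  rw [permRep_single]
  congr 1
  conv_rhs => rw [← QuotientGroup.out_eq' c]
  rfl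

lemma apply_smul_of_mem_repFixed {P : Subgroup G} {v : X →₀ F}
    (hv : v ∈ repFixed (permRep F G X) P) {g : G} (hg : g ∈ P) (x : X) : v (g • x) = v x := by
  conv_lhs => rw [← hv g hg]
  rw [permRep_apply, inv_smul_smul]

lemma eq_sum_relTrace_of_mem_repFixed [Finite G] [Fintype X] {P : Subgroup G} {v : X →₀ F}
    (hv : v ∈ repFixed (permRep F G X) P) [Fintype (orbitRel.Quotient P X)] :
    v = ∑ ω : orbitRel.Quotient P X,
      relTrace (permRep F G X) P (stabilizer G ω.out ⊓ P) (Finsupp.single ω.out (v ω.out)) := by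
  classical
  have hconst : ∀ ω : orbitRel.Quotient P X, ∀ y : orbit P ω.out, v y = v ω.out := by
    rintro ω ⟨_, g, rfl⟩
    exact apply_smul_of_mem_repFixed hv g.2 _
  calc v = ∑ x, Finsupp.single x (v x) := (Finsupp.univ_sum_single v).symm
    _ = ∑ p : Σ ω : orbitRel.Quotient P X, orbit P ω.out, Finsupp.single (p.2 : X) (v p.2) :=
      Fintype.sum_equiv (selfEquivSigmaOrbits P X) _ _ fun _ => rfl
    _ = _ := by
      rw [Fintype.sum_sigma]
      simp only [hconst, relTrace_permRep_single]

lemma single_mem_repFixed_stabilizer (P : Subgroup G) (x : X) (r : F) :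
    Finsupp.single x r ∈ repFixed (permRep F G X) (stabilizer G x ⊓ P) := fun g hg => by
  rw [permRep_single, (Subgroup.mem_inf.mp hg).1]

/-- Away from the fixed points, a `P`-fixed vector is a combination of orbit sums, and the orbit
sum of `x` is the relative trace of `single x 1` from the stabilizer of `x`. -/
lemma mem_brauerTraceSub_permRep_iff [Finite G] [Fintype X] {p : ℕ} [Fact p.Prime] [CharP F p]
    {P : Subgroup G} (hP : IsPGroup p P) {v : X →₀ F} (hv : v ∈ repFixed (permRep F G X) P) :
    v ∈ brauerTraceSub (permRep F G X) P ↔ ∀ x ∈ fixedPoints P X, v x = 0 := by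
  have := Fintype.ofFinite (orbitRel.Quotient P X)
  constructor
  · intro htr x hx
    exact brauerTraceSub_le_ker hP (Finsupp.lapply x)
      (fun g hg w => by
        rw [Finsupp.lapply_apply, Finsupp.lapply_apply, permRep_apply]
        exact congrArg w (hx ⟨g⁻¹, inv_mem hg⟩)) htr
  · intro hzero
    rw [eq_sum_relTrace_of_mem_repFixed hv]
    refine Submodule.sum_mem _ fun ω _ => ?_
    by_cases hω : ω.out ∈ fixedPoints P X
    · have := Fintype.ofFinite (P ⧸ (stabilizer G ω.out ⊓ P).subgroupOf P)
      rw [hzero _ hω, Finsupp.single_zero, relTrace_eq]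
      simp
    · refine Submodule.subset_span ⟨_, lt_of_le_of_ne inf_le_right fun h => hω ?_, _,
        single_mem_repFixed_stabilizer P _ _, rfl⟩
      intro g
      have hg : (g : G) ∈ stabilizer G ω.out ⊓ P := by rw [h]; exact g.2
      exact (Subgroup.mem_inf.mp hg).1

theorem brauerDim_permRep [Finite G] [Fintype X] {p : ℕ} [Fact p.Prime] [CharP F p]
    {P : Subgroup G} (hP : IsPGroup p P) :
    brauerDim (permRep F G X) P = Nat.card (fixedPoints P X) := by
  classical
  set M := repFixed (permRep F G X) P
  let L : M →ₗ[F] (fixedPoints P X →₀ F) :=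
    Finsupp.lsubtypeDomain (fixedPoints P X) ∘ₗ M.subtype
  have hL : Function.Surjective L := fun f => by
    refine ⟨⟨Finsupp.mapDomain Subtype.val f, fun g hg => ?_⟩, ?_⟩
    · rw [permRep_eq_mapDomain, ← Finsupp.mapDomain_comp]
      congr 1
      funext x
      exact x.2 ⟨g, hg⟩
    · ext x
      exact Finsupp.mapDomain_apply Subtype.val_injective f x
  have hker : LinearMap.ker L = (brauerTraceSub (permRep F G X) P).comap M.subtype := by
    ext ⟨v, hv⟩
    rw [LinearMap.mem_ker, Submodule.mem_comap, Submodule.subtype_apply,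
      mem_brauerTraceSub_permRep_iff hP hv]
    simp [L, Finsupp.ext_iff, Finsupp.lsubtypeDomain_apply]
  have e := (Submodule.quotEquivOfEq _ _ hker.symm).trans
    (LinearMap.quotKerEquivOfSurjective (R := F) (M := M) (M₂ := fixedPoints P X →₀ F) L hL)
  rw [brauerDim, e.finrank_eq, Module.finrank_finsupp_self, Nat.card_eq_fintype_card]

lemma repIso_permRep_of_equiv {Y : Type} [MulAction G Y] (e : X ≃ Y)
    (he : ∀ (g : G) x, e (g • x) = g • e x) : RepIso (permRep F G X) (permRep F G Y) := by
  refine ⟨Finsupp.domLCongr e, fun g v => ?_⟩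
  induction v using Finsupp.induction_linear with
  | zero => simp
  | add v w hv hw => simp only [map_add, hv, hw]
  | single x c => rw [permRep_single, Finsupp.domLCongr_single, Finsupp.domLCongr_single,
      permRep_single, he]

lemma repIso_permRep_trivial [Unique X] :
    RepIso (permRep F G X) (Representation.trivial F G F) :=
  ⟨Finsupp.uniqueLinearEquiv F F (default : X), fun g v => by
    simp [permRep_apply, Subsingleton.elim (g⁻¹ • default : X) default]⟩

end PermutationModule

section NaturalModule

variable {F : Type} [Field F] {X : Type}

variable (F X) in
noncomputable def constVec [Fintype X] : X →₀ F := ∑ x, Finsupp.single x 1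

variable (F X) in
noncomputable def augmentation : (X →₀ F) →ₗ[F] F := Finsupp.linearCombination F fun _ => 1

lemma constVec_apply [Fintype X] (y : X) : constVec F X y = 1 := by
  classical
  simp [constVec, Finsupp.finsetSum_apply, Finsupp.single_apply]

lemma augmentation_single (x : X) (c : F) : augmentation F X (Finsupp.single x c) = c := by
  simp [augmentation]

lemma augmentation_constVec [Fintype X] : augmentation F X (constVec F X) = Fintype.card X := by
  simp [constVec, augmentation_single]

lemma permRep_constVec [Fintype X] (g : Equiv.Perm X) :
    permRep F _ X g (constVec F X) = constVec F X := by
  ext y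
  rw [permRep_apply, constVec_apply, constVec_apply]

lemma augmentation_permRep (g : Equiv.Perm X) (v : X →₀ F) :
    augmentation F X (permRep F _ X g v) = augmentation F X v := by
  induction v using Finsupp.induction_linear with
  | zero => simp
  | add v w hv hw => simp only [map_add, hv, hw]
  | single x c => rw [permRep_single, augmentation_single, augmentation_single]

lemma constVec_ne_zero [Fintype X] [Nonempty X] : constVec F X ≠ 0 := fun h => by
  simpa [h] using constVec_apply (F := F) (Classical.arbitrary X)

lemma augmentation_ker_ne_bot [Nontrivial X] : LinearMap.ker (augmentation F X) ≠ ⊥ := by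
  obtain ⟨x, y, hxy⟩ := exists_pair_ne X
  refine (Submodule.ne_bot_iff _).mpr
    ⟨Finsupp.single x 1 - Finsupp.single y 1, by simp [augmentation_single], ?_⟩
  rw [sub_ne_zero]
  exact fun h => hxy (Finsupp.single_left_injective one_ne_zero h)

lemma permRep_swap_sub [DecidableEq X] (i j : X) (v : X →₀ F) :
    permRep F _ X (Equiv.swap i j) v - v
      = (v j - v i) • (Finsupp.single i 1 - Finsupp.single j 1) := by
  ext y
  rw [Finsupp.sub_apply, permRep_apply, Equiv.swap_inv, Finsupp.smul_apply, Finsupp.sub_apply]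
  rcases eq_or_ne y i with rfl | hyi
  · rcases eq_or_ne y j with rfl | hyj
    · simp
    · simp [Equiv.swap_apply_left, hyj]
  · rcases eq_or_ne y j with rfl | hyj
    · simp [Equiv.swap_apply_right, Ne.symm hyi]
    · simp [Equiv.swap_apply_of_ne_of_ne hyi hyj, Ne.symm hyi, Ne.symm hyj]

lemma augmentation_ker_le_span [Fintype X] (x₀ : X) :
    LinearMap.ker (augmentation F X)
      ≤ Submodule.span F (Set.range fun x => Finsupp.single x 1 - Finsupp.single x₀ 1) := by
  intro w hw
  have hw' : ∑ x, w x • (Finsupp.single x (1 : F) - Finsupp.single x₀ 1) = w := by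
    have hsum : ∑ x, w x = 0 := by
      rw [LinearMap.mem_ker, ← Finsupp.univ_sum_single w, map_sum] at hw
      simpa [augmentation_single] using hw
    simp only [smul_sub, Finset.sum_sub_distrib, ← Finset.sum_smul, hsum, zero_smul, sub_zero]
    simp only [Finsupp.smul_single_one, Finsupp.univ_sum_single]
  rw [← hw']
  exact Submodule.sum_mem _ fun x _ => Submodule.smul_mem _ _ (Submodule.subset_span ⟨x, rfl⟩)

/-- A vector `v` with `v i ≠ v j` yields `single i 1 - single j 1` via the transposition `(i j)`,
and the conjugates of that vector span the augmentation kernel. -/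
lemma le_span_constVec_or_ker_augmentation_le [Fintype X] (A : Submodule F (X →₀ F))
    (hA : ∀ g, ∀ v ∈ A, permRep F (Equiv.Perm X) X g v ∈ A) :
    A ≤ Submodule.span F {constVec F X} ∨ LinearMap.ker (augmentation F X) ≤ A := by
  classical
  refine or_iff_not_imp_left.mpr fun hAC => ?_
  obtain ⟨v, hvA, hvC⟩ := SetLike.not_le_iff_exists.mp hAC
  obtain ⟨i, j, hij⟩ : ∃ i j, v i ≠ v j := by
    by_contra! hconst
    obtain ⟨x₀, -⟩ := Finsupp.ne_iff.mp fun h : v = 0 => hvC (h ▸ zero_mem _)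
    refine hvC (Submodule.mem_span_singleton.mpr ⟨v x₀, ?_⟩)
    ext y
    simp [constVec_apply, hconst y x₀]
  have hdiff : Finsupp.single i 1 - Finsupp.single j 1 ∈ A := by
    have h := A.smul_mem (v j - v i)⁻¹ (A.sub_mem (hA (Equiv.swap i j) v hvA) hvA)
    rwa [permRep_swap_sub, smul_smul, inv_mul_cancel₀ (sub_ne_zero.mpr hij.symm), one_smul] at h
  have hk : ∀ k, Finsupp.single k 1 - Finsupp.single j 1 ∈ A := by
    intro k
    rcases eq_or_ne k j with rfl | hkj
    · simp
    · have h := hA (Equiv.swap i k) _ hdiff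
      have hji : j ≠ i := fun h => hij (h ▸ rfl)
      rwa [map_sub, permRep_single, permRep_single, Equiv.Perm.smul_def, Equiv.Perm.smul_def,
        Equiv.swap_apply_left, Equiv.swap_apply_of_ne_of_ne hji hkj.symm] at h
  exact (augmentation_ker_le_span j).trans (Submodule.span_le.mpr (Set.range_subset_iff.mpr hk))

lemma augmentation_surjective [Nonempty X] : Function.Surjective (augmentation F X) :=
  fun c => ⟨Finsupp.single (Classical.arbitrary X) c, augmentation_single _ _⟩

lemma isCompl_ker_augmentation_span_constVec [Fintype X] (hn : (Fintype.card X : F) ≠ 0) :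
    IsCompl (LinearMap.ker (augmentation F X)) (Submodule.span F {constVec F X}) := by
  have : Nonempty X := Fintype.card_pos_iff.mp (Nat.pos_of_ne_zero fun h => hn (by simp [h]))
  exact Submodule.isCompl_span_singleton_of_isCoatom_of_notMem
    (LinearMap.isCoatom_ker_of_surjective augmentation_surjective)
    (by rwa [LinearMap.mem_ker, augmentation_constVec])

lemma permRep_mem_ker_augmentation {g : Equiv.Perm X} {v : X →₀ F}
    (hv : v ∈ LinearMap.ker (augmentation F X)) :
    permRep F _ X g v ∈ LinearMap.ker (augmentation F X) := by
  rwa [LinearMap.mem_ker, augmentation_permRep]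

lemma permRep_mem_span_constVec [Fintype X] {g : Equiv.Perm X} {v : X →₀ F}
    (hv : v ∈ Submodule.span F {constVec F X}) :
    permRep F _ X g v ∈ Submodule.span F {constVec F X} := by
  obtain ⟨c, rfl⟩ := Submodule.mem_span_singleton.mp hv
  rw [map_smul, permRep_constVec]
  exact Submodule.smul_mem _ _ (Submodule.mem_span_singleton_self _)

lemma not_isIndecomposableRep_permRep [Fintype X] [Nontrivial X]
    (hn : (Fintype.card X : F) ≠ 0) :
    ¬ IsIndecomposableRep (permRep F (Equiv.Perm X) X) := fun h => by
  have hc := isCompl_ker_augmentation_span_constVec hn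
  rcases h.2 _ _ (fun _ _ => permRep_mem_ker_augmentation) (fun _ _ => permRep_mem_span_constVec)
    hc.inf_eq_bot hc.sup_eq_top with h | h
  · exact augmentation_ker_ne_bot h
  · exact constVec_ne_zero (Submodule.span_singleton_eq_bot.mp h)

end NaturalModule

section NaturalModuleSummands

variable {F : Type} [Field F] {X : Type} [Fintype X]
variable {V : Type} [AddCommGroup V] [Module F V] {ρ : Representation F (Equiv.Perm X) V}

lemma isRepSummand_trivial_of_range_le_span_constVec [Nonempty X] (hV : ∃ v : V, v ≠ 0)
    (ι : V →ₗ[F] (X →₀ F)) (hι : ∀ g v, ι (ρ g v) = permRep F _ X g (ι v))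
    (hinj : Function.Injective ι) (hC : LinearMap.range ι ≤ Submodule.span F {constVec F X}) :
    IsRepSummand (Representation.trivial F (Equiv.Perm X) F) ρ := by
  obtain ⟨v₀, hv₀⟩ := hV
  let φ : V →ₗ[F] F := Finsupp.lapply (Classical.arbitrary X) ∘ₗ ι
  have hφ : ∀ v, ι v = φ v • constVec F X := fun v => by
    obtain ⟨c, hc⟩ := Submodule.mem_span_singleton.mp (hC ⟨v, rfl⟩)
    simp [φ, ← hc, constVec_apply]
  have htriv : ∀ g v, ρ g v = v := fun g v =>
    hinj (by rw [hι, hφ, map_smul, permRep_constVec])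
  have hφ₀ : φ v₀ ≠ 0 := fun h => hv₀ (hinj (by rw [hφ, h, zero_smul, map_zero]))
  refine ⟨φ, LinearMap.toSpanSingleton F V ((φ v₀)⁻¹ • v₀), fun g v => by rw [htriv]; rfl,
    fun g c => (htriv g _).symm, fun v => hinj ?_⟩
  rw [LinearMap.toSpanSingleton_apply, smul_smul, map_smul, hφ v₀, smul_smul, mul_assoc,
    inv_mul_cancel₀ hφ₀, mul_one, ← hφ]

theorem IsIndecomposableRep.isRepSummand_permRep_cases [Nontrivial X]
    (hρ : IsIndecomposableRep ρ) (hs : IsRepSummand (permRep F (Equiv.Perm X) X) ρ) :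
    IsRepSummand (Representation.trivial F (Equiv.Perm X) F) ρ ∨
      ((Fintype.card X : F) = 0 ∧ RepIso ρ (permRep F (Equiv.Perm X) X)) ∨
      ((Fintype.card X : F) ≠ 0 ∧
        RepIso (permRep F (Equiv.Perm X) X)
          (ρ.prod (Representation.trivial F (Equiv.Perm X) F))) := by
  obtain ⟨ι, π, hι, hπ, hπι⟩ := hs
  have hinj : Function.Injective ι := Function.LeftInverse.injective hπι
  have hAB : LinearMap.range ι ⊓ LinearMap.ker π = ⊥ := by
    refine eq_bot_iff.mpr ?_
    rintro _ ⟨⟨v, rfl⟩, hv⟩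
    rw [SetLike.mem_coe, LinearMap.mem_ker, hπι] at hv
    rw [hv, map_zero]
    exact zero_mem _
  rcases le_span_constVec_or_ker_augmentation_le (LinearMap.range ι)
    (by rintro g _ ⟨v, rfl⟩; exact ⟨ρ g v, hι g v⟩) with hAC | hSA
  · exact Or.inl (isRepSummand_trivial_of_range_le_span_constVec hρ.1 ι hι hinj hAC)
  rcases le_span_constVec_or_ker_augmentation_le (LinearMap.ker π)
    (fun g w hw => by rw [LinearMap.mem_ker, hπ, LinearMap.mem_ker.mp hw, map_zero]) with hBC | hSB
  swap
  · exact absurd (eq_bot_iff.mpr (hAB ▸ le_inf hSA hSB)) augmentation_ker_ne_bot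
  rcases (nonzero_span_atom _ constVec_ne_zero).le_iff.mp hBC with hB | hB
  · have hsurj : Function.Surjective ι :=
      (Function.LeftInverse.rightInverse_of_injective hπι (LinearMap.ker_eq_bot.mp hB)).surjective
    have e : RepIso ρ (permRep F (Equiv.Perm X) X) :=
      ⟨LinearEquiv.ofBijective ι ⟨hinj, hsurj⟩, hι⟩
    exact Or.inr (Or.inl ⟨by_contra fun hn => not_isIndecomposableRep_permRep hn
      (e.isIndecomposableRep hρ), e⟩)
  · have hn : (Fintype.card X : F) ≠ 0 := fun hn => by
      have hmem : constVec F X ∈ LinearMap.range ι ⊓ LinearMap.ker π :=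
        ⟨hSA (by rw [LinearMap.mem_ker, augmentation_constVec, hn]),
          hB ▸ Submodule.mem_span_singleton_self _⟩
      exact constVec_ne_zero (by rwa [hAB, Submodule.mem_bot] at hmem)
    refine Or.inr (Or.inr ⟨hn, LinearMap.equivProdOfSurjectiveOfIsCompl π (augmentation F X)
      (LinearMap.range_eq_top.mpr fun v => ⟨ι v, hπι v⟩)
      (LinearMap.range_eq_top.mpr augmentation_surjective)
      (hB ▸ (isCompl_ker_augmentation_span_constVec hn).symm),
      fun g m => Prod.ext (hπ g m) (augmentation_permRep g m)⟩)

end NaturalModuleSummands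

section Tabloids

variable {n : ℕ}

def hookShape (n : ℕ) : ℕ → ℕ := fun j => if j = 0 then n - 1 else if j = 1 then 1 else 0

def rowShape (n : ℕ) : ℕ → ℕ := fun j => if j = 0 then n else 0

lemma Tabloid.hook_row_zero (T : Tabloid n (hookShape n)) : T.row 0 = (T.row 1)ᶜ := by
  refine Finset.eq_of_subset_of_card_le
    (Finset.subset_compl_iff_disjoint_right.mpr (T.disj 0 1 zero_ne_one)) ?_
  rw [Finset.card_compl, T.card_row, T.card_row, Fintype.card_fin]
  rfl

lemma Tabloid.hook_ext {T S : Tabloid n (hookShape n)} (h : T.row 1 = S.row 1) : T = S := by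
  refine Tabloid.ext' (funext fun j => ?_)
  rcases j with _ | _ | j
  · rw [T.hook_row_zero, S.hook_row_zero, h]
  · exact h
  · have hj : hookShape n (j + 2) = 0 := by simp [hookShape]
    rw [Finset.card_eq_zero.mp ((T.card_row _).trans hj),
      Finset.card_eq_zero.mp ((S.card_row _).trans hj)]

def hookTabloid (x : Fin n) : Tabloid n (hookShape n) where
  row j := if j = 0 then {x}ᶜ else if j = 1 then {x} else ∅
  disj i j hij := by split_ifs <;> simp_all [Finset.disjoint_left]
  card_row j := by unfold hookShape; split_ifs <;> simp [Finset.card_compl]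
  cover y := by
    by_cases hy : y = x
    exacts [⟨1, by simp [hy]⟩, ⟨0, by simp [hy]⟩]

noncomputable def hookTabloidEquiv (n : ℕ) : Fin n ≃ Tabloid n (hookShape n) :=
  Equiv.ofBijective hookTabloid
    ⟨fun x y h => Finset.singleton_injective (congrArg (·.row 1) h), fun T => by
      obtain ⟨a, ha⟩ := Finset.card_eq_one.mp (T.card_row 1)
      exact ⟨a, Tabloid.hook_ext ha.symm⟩⟩

lemma smul_hookTabloid (σ : Equiv.Perm (Fin n)) (x : Fin n) :
    σ • hookTabloid x = hookTabloid (σ x) :=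
  Tabloid.hook_ext (Finset.image_singleton σ x)

lemma repIso_permRep_youngRep_hookShape (F : Type) [Field F] :
    RepIso (permRep F (Equiv.Perm (Fin n)) (Fin n)) (youngRep F n (hookShape n)) :=
  repIso_permRep_of_equiv (hookTabloidEquiv n) fun σ x => (smul_hookTabloid σ x).symm

def rowTabloid (n : ℕ) : Tabloid n (rowShape n) where
  row j := if j = 0 then Finset.univ else ∅
  disj i j hij := by split_ifs <;> simp_all
  card_row j := by unfold rowShape; split_ifs <;> simp
  cover y := ⟨0, by simp⟩

instance : Unique (Tabloid n (rowShape n)) where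
  default := rowTabloid n
  uniq T := Tabloid.ext' <| funext fun j => by
    rcases j with _ | j
    · exact Finset.eq_univ_of_card _ ((T.card_row 0).trans (Fintype.card_fin n).symm)
    · exact Finset.card_eq_zero.mp (T.card_row _)

lemma isPartitionFn_rowShape (n : ℕ) : IsPartitionFn (rowShape n) n := by
  refine ⟨⟨(Set.finite_singleton 0).subset fun j hj => ?_, ?_⟩, fun i j hij => ?_⟩
  · by_contra h
    exact hj (if_neg h)
  · rw [finsum_eq_single (rowShape n) 0 fun j hj => if_neg hj]
    rfl
  · unfold rowShape
    split_ifs <;> omega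

lemma strictDominates_rowShape_hookShape (hn : n ≠ 0) :
    StrictDominates (rowShape n) (hookShape n) := by
  refine ⟨fun N => ?_, fun h => by simpa [rowShape, hookShape] using congrFun h 1⟩
  rcases N with _ | _ | N
  · simp
  · simp [rowShape, hookShape]
  · simp [Finset.sum_range_succ', rowShape, hookShape]
    omega

end Tabloids

lemma ncard_orbit_eq_one_iff {G X : Type} [Group G] [MulAction G X] {x : X} :
    (orbit G x).ncard = 1 ↔ x ∈ fixedPoints G X := by
  rw [mem_fixedPoints', Set.ncard_eq_one]
  constructor
  · rintro ⟨a, ha⟩ y hy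
    rw [ha] at hy
    have hx := mem_orbit_self (M := G) x
    rw [ha] at hx
    exact hy.trans hx.symm
  · exact fun h => ⟨x, Set.eq_singleton_iff_unique_mem.mpr ⟨mem_orbit_self x, h⟩⟩

lemma count_one_orbitType (n : ℕ) (P : Subgroup (Equiv.Perm (Fin n))) :
    Multiset.count 1 (orbitType n P) = Nat.card (fixedPoints P (Fin n)) := by
  classical
  rw [orbitType, Multiset.count_map, ← Finset.filter_val, Finset.filter_image,
    Finset.card_val, Finset.card_image_of_injOn]
  · simp_rw [eq_comm (a := 1), ncard_orbit_eq_one_iff]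
    rw [Nat.card_eq_fintype_card, Fintype.card_subtype]
  · intro x hx y _ hxy
    have hxfix := ncard_orbit_eq_one_iff.mp (Finset.mem_filter.mp hx).2.symm
    have hy : y ∈ orbit P x := by
      rw [show orbit P x = orbit P y from hxy]
      exact mem_orbit_self y
    exact (mem_fixedPoints'.mp hxfix y hy).symm

theorem stmt_18_general (p : ℕ) [Fact p.Prime] (F : Type) [Field F] [CharP F p]
    (n : ℕ) (hn : 2 ≤ n)
    (V : Type) [AddCommGroup V] [Module F V] [FiniteDimensional F V]
    (ρ : Representation F (Equiv.Perm (Fin n)) V)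
    (hY : IsYoungModuleFor F n (fun j => if j = 0 then n - 1 else if j = 1 then 1 else 0) ρ)
    (P : Subgroup (Equiv.Perm (Fin n))) (hP : IsPGroup p P)
    (a0 : ℕ) (ha0 : Multiset.count 1 (orbitType n P) = a0) :
    (a0 = 0 → brauerDim ρ P = 0) ∧
    (1 ≤ a0 → brauerDim ρ P = if p ∣ n then a0 else a0 - 1) := by
  obtain ⟨hInd, hSum, hNotDom⟩ := hY
  have : Nontrivial (Fin n) := Fin.nontrivial_iff_two_le.mpr hn
  have hperm : brauerDim (permRep F _ (Fin n)) P = a0 := by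
    rw [brauerDim_permRep hP, ← count_one_orbitType, ha0]
  have hcard : ((Fintype.card (Fin n) : ℕ) : F) = 0 ↔ p ∣ n := by
    rw [Fintype.card_fin, CharP.cast_eq_zero_iff F p]
  rcases hInd.isRepSummand_permRep_cases
      ((repIso_permRep_youngRep_hookShape F).isRepSummand.trans hSum) with htriv | ⟨hp, e⟩ | ⟨hp, e⟩
  · exact absurd (repIso_permRep_trivial.isRepSummand.trans htriv)
      (hNotDom _ (isPartitionFn_rowShape n) (strictDominates_rowShape_hookShape (by omega)))
  · have hdim : brauerDim ρ P = a0 := (e.brauerDim_eq P).trans hperm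
    simp [hdim, hcard.mp hp]
  · have hdim : a0 = brauerDim ρ P + 1 := by
      rw [← hperm, e.brauerDim_eq, brauerDim_prod, brauerDim_trivial hP]
    rw [if_neg (mt hcard.mpr hp)]
    omega

/-- `dim_F Y^{(n-1,1)}(P)` in terms of the number `a_0` of fixed
points of `P`. -/
theorem stmt_18 (p : ℕ) [Fact p.Prime] (F : Type) [Field F] [IsAlgClosed F] [CharP F p]
    (n : ℕ) (hn : 2 ≤ n)
    (V : Type) [AddCommGroup V] [Module F V] [FiniteDimensional F V]
    (ρ : Representation F (Equiv.Perm (Fin n)) V)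
    (hY : IsYoungModuleFor F n (fun j => if j = 0 then n - 1 else if j = 1 then 1 else 0) ρ)
    (P : Subgroup (Equiv.Perm (Fin n))) (hP : IsPGroup p P)
    (a0 : ℕ) (ha0 : Multiset.count 1 (orbitType n P) = a0) :
    (a0 = 0 → brauerDim ρ P = 0) ∧
    (1 ≤ a0 → brauerDim ρ P = if p ∣ n then a0 else a0 - 1) :=
  stmt_18_general p F n hn V ρ hY P hP a0 ha0
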